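/- arXiv:1707.07351 — 2 statements merged into one kernel-verified Lean document; each statement's English description precedes it below -/
import Mathlib

section
/- Let K ⊆ ℝ^N be non-empty, closed and convex, and let f : K → ℝ^N be C¹ and satisfy (f(z) − f(w))ᵀ(z − w) ≤ 0 for all z, w ∈ K. Let z(t) and z'(t) be any two Carathéodory solutions on ℝ₊ of the projected differential equation ż = f(z) − P_{N_K(z)}(f(z)) taking values in K. Then the Euclidean distance |z(t) − z'(t)| is non-increasing in t. -/
/-!
For two solutions, `D = z - z'` is absolutely continuous with `d/dt ‖D‖² = 2⟪ż - ż', D⟫` a.e.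
The projected field inherits the monotonicity of `f`, because `P_{N_K(z)}(f z)` is a normal vector
at `z` and so only contributes terms of the right sign; hence `‖D‖²` is non-increasing.

Solutions are defined through the Bochner integral, which is junk (`0`) for non-integrable
integrands, so the field must first be shown integrable along a solution. The same energy estimate
gives the a priori bound `‖z r - z 0‖ ≤ 2 ‖f (z 0)‖ r`, hence a bound on the field up to the
supremum of the integrability horizon, and past that supremum the solution is constant.
-/

open Set Filter MeasureTheory Metric
open scoped RealInnerProductSpace Topology NNReal

noncomputable section

open Classical in
/-- Euclidean nearest-point projection onto a set `C` (junk value if no nearest point exists). -/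
def projOn {E : Type*} [NormedAddCommGroup E] [InnerProductSpace ℝ E]
    (C : Set E) (x : E) : E :=
  if h : ∃ p, p ∈ C ∧ ∀ y ∈ C, ‖x - p‖ ≤ ‖x - y‖ then h.choose else 0

/-- Normal cone to `K` at `z`. -/
def normalCone {E : Type*} [NormedAddCommGroup E] [InnerProductSpace ℝ E]
    (K : Set E) (z : E) : Set E :=
  {v | ∀ w ∈ K, (inner ℝ v (w - z) : ℝ) ≤ 0}

/-- Vector field of the projected (subgradient) dynamics `f(z) - P_{N_K(z)}(f(z))`. -/
def projField {E : Type*} [NormedAddCommGroup E] [InnerProductSpace ℝ E]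
    (K : Set E) (f : E → E) (z : E) : E :=
  f z - projOn (normalCone K z) (f z)

/-- Carathéodory solution of `ż = g(z)` on `[0,∞)` (integral form), with values in `K`. -/
def IsSolFrom0 {E : Type*} [NormedAddCommGroup E] [InnerProductSpace ℝ E]
    (g : E → E) (K : Set E) (z : ℝ → E) : Prop :=
  (∀ t, 0 ≤ t → z t ∈ K) ∧ ∀ t, 0 ≤ t → z t = z 0 + ∫ s in (0:ℝ)..t, g (z s)

/-- Carathéodory solution of `ż = g(z)` on all of `ℝ` (integral form), with values in `K`. -/
def IsSolOnReal {E : Type*} [NormedAddCommGroup E] [InnerProductSpace ℝ E]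
    (g : E → E) (K : Set E) (z : ℝ → E) : Prop :=
  (∀ t, z t ∈ K) ∧ ∀ a b : ℝ, z b = z a + ∫ s in a..b, g (z s)

/-- The ω-limit set of the semi-flow of Carathéodory solutions of `ż = g(z)` in `K`. -/
def omegaSet {E : Type*} [NormedAddCommGroup E] [InnerProductSpace ℝ E]
    (g : E → E) (K : Set E) : Set E :=
  {p | ∃ z : ℝ → E, IsSolFrom0 g K z ∧ ∃ u : ℕ → ℝ,
    Tendsto u atTop atTop ∧ Tendsto (fun k => z (u k)) atTop (𝓝 p)}

/-- A face of a convex set `K`. -/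
def IsFace {E : Type*} [NormedAddCommGroup E] [InnerProductSpace ℝ E]
    (K F : Set E) : Prop :=
  F ⊆ K ∧ Convex ℝ F ∧ ∀ x ∈ K, ∀ y ∈ K, ∀ c : ℝ, 0 < c → c < 1 →
    c • x + (1 - c) • y ∈ F → (x ∈ F ∧ y ∈ F)

/-- The minimal face of `K` containing `A`. -/
def minFace {E : Type*} [NormedAddCommGroup E] [InnerProductSpace ℝ E]
    (K A : Set E) : Set E :=
  ⋂₀ {F | IsFace K F ∧ A ⊆ F}

/-- The saddle-point vector field `(φ_x, -φ_y)`: coordinates with index `< p` are the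
maximizing (`x`) variables, the remaining ones the minimizing (`y`) variables. -/
def gradField (N p : ℕ) (φ : EuclideanSpace ℝ (Fin N) → ℝ)
    (z : EuclideanSpace ℝ (Fin N)) : EuclideanSpace ℝ (Fin N) :=
  WithLp.toLp 2 (fun i : Fin N => if (i : ℕ) < p then gradient φ z i else -(gradient φ z i))

/-- `C`-restricted saddle point of `φ`, with maximizing coordinates those of index `< p`. -/
def IsSaddlePt (N p : ℕ) (C : Set (EuclideanSpace ℝ (Fin N)))
    (φ : EuclideanSpace ℝ (Fin N) → ℝ) (zb : EuclideanSpace ℝ (Fin N)) : Prop :=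
  zb ∈ C ∧ ∀ w ∈ C,
    ((∀ i : Fin N, ¬ (i : ℕ) < p → w i = zb i) → φ w ≤ φ zb) ∧
    ((∀ i : Fin N, (i : ℕ) < p → w i = zb i) → φ zb ≤ φ w)

/-- The set of `C`-restricted saddle points. -/
def saddleSet (N p : ℕ) (C : Set (EuclideanSpace ℝ (Fin N)))
    (φ : EuclideanSpace ℝ (Fin N) → ℝ) : Set (EuclideanSpace ℝ (Fin N)) :=
  {z | IsSaddlePt N p C φ z}

/-- Global convergence of the subgradient method on `C` applied to `φ`:
every Carathéodory solution converges to the set of `C`-restricted saddle points. -/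
def GloballyConvergent (N p : ℕ) (C : Set (EuclideanSpace ℝ (Fin N)))
    (φ : EuclideanSpace ℝ (Fin N) → ℝ) : Prop :=
  ∀ z : ℝ → EuclideanSpace ℝ (Fin N),
    IsSolFrom0 (projField C (gradField N p φ)) C z →
    Tendsto (fun t => infDist (z t) (saddleSet N p C φ)) atTop (𝓝 0)

/-- `φ` is concave-convex on `C`: concave in the maximizing coordinates (index `< p`) on every
section of `C`, convex in the minimizing coordinates on every section of `C`. -/
def ConcaveConvexOn' (N p : ℕ) (C : Set (EuclideanSpace ℝ (Fin N)))
    (φ : EuclideanSpace ℝ (Fin N) → ℝ) : Prop :=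
  (∀ z₀ : EuclideanSpace ℝ (Fin N),
    ConcaveOn ℝ {w ∈ C | ∀ i : Fin N, ¬ (i : ℕ) < p → w i = z₀ i} φ) ∧
  (∀ z₀ : EuclideanSpace ℝ (Fin N),
    ConvexOn ℝ {w ∈ C | ∀ i : Fin N, (i : ℕ) < p → w i = z₀ i} φ)

theorem AbsolutelyContinuousOnInterval.of_dist_le_mul {X Y : Type*} [PseudoMetricSpace X]
    [PseudoMetricSpace Y] {f : ℝ → X} {g : ℝ → Y} {a b L : ℝ}
    (hg : AbsolutelyContinuousOnInterval g a b)
    (hfg : ∀ x ∈ uIcc a b, ∀ y ∈ uIcc a b, dist (f x) (f y) ≤ L * dist (g x) (g y)) :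
    AbsolutelyContinuousOnInterval f a b := by
  have hLg := Filter.Tendsto.const_mul L hg
  rw [mul_zero] at hLg
  refine squeeze_zero' (Eventually.of_forall fun _ ↦ Finset.sum_nonneg fun _ _ ↦ dist_nonneg) ?_
    hLg
  rw [eventually_inf_principal]
  filter_upwards with E hE
  rw [Finset.mul_sum]
  exact Finset.sum_le_sum fun i hi ↦ hfg _ (hE.1 i hi).1 _ (hE.1 i hi).2

theorem IntervalIntegrable.absolutelyContinuousOnInterval_add_intervalIntegral {F : Type*}
    [NormedAddCommGroup F] [NormedSpace ℝ F] {H : ℝ → F} {a b : ℝ}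
    (hH : IntervalIntegrable H volume a b) (c : F) :
    AbsolutelyContinuousOnInterval (fun x ↦ c + ∫ r in a..x, H r) a b := by
  refine (hH.norm.absolutelyContinuousOnInterval_intervalIntegral left_mem_uIcc).of_dist_le_mul
    (L := 1) fun x hx y hy ↦ ?_
  have hsub : ∀ {u v}, u ∈ uIcc a b → v ∈ uIcc a b → IntervalIntegrable H volume u v :=
    fun hu hv ↦ hH.mono_set (uIcc_subset_uIcc hu hv)
  rw [one_mul, dist_add_left, dist_eq_norm, Real.dist_eq,
    intervalIntegral.integral_interval_sub_left (hsub left_mem_uIcc hx) (hsub left_mem_uIcc hy),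
    intervalIntegral.integral_interval_sub_left (hsub left_mem_uIcc hx).norm
      (hsub left_mem_uIcc hy).norm]
  exact intervalIntegral.norm_integral_le_abs_integral_norm

theorem integrableOn_Ioc_sSup_of_norm_le {F : Type*} [NormedAddCommGroup F] {G : ℝ → F}
    {a t C : ℝ} (hat : a ≤ t) (hC : ∀ r ∈ Ioc a t, ‖G r‖ ≤ C) :
    IntegrableOn G (Ioc a (sSup {u ∈ Icc a t | IntervalIntegrable G volume a u})) := by
  set S := {u ∈ Icc a t | IntervalIntegrable G volume a u}
  obtain ⟨u, -, hu, huS⟩ := exists_seq_tendsto_sSup (S := S) ⟨a, ⟨le_rfl, hat⟩, .refl⟩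
    ⟨t, fun _ hv ↦ hv.1.2⟩
  refine integrableOn_Ioc_of_intervalIntegral_norm_bounded_right (I := max C 0 * (t - a))
    (fun n ↦ (intervalIntegrable_iff_integrableOn_Ioc_of_le (huS n).1.1).1 (huS n).2) hu
    (Eventually.of_forall fun n ↦ ?_)
  have hn := (huS n).1
  calc ∫ x in Ioc a (u n), ‖G x‖ ≤ ∫ _ in Ioc a (u n), max C 0 := by
        refine setIntegral_mono_on ((intervalIntegrable_iff_integrableOn_Ioc_of_le hn.1).1
          (huS n).2).norm (integrableOn_const measure_Ioc_lt_top.ne) measurableSet_Ioc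
          fun r hr ↦ (hC r ⟨hr.1, hr.2.trans hn.2⟩).trans (le_max_left _ _)
    _ = max C 0 * (u n - a) := by
        rw [setIntegral_const, Real.volume_real_Ioc_of_le hn.1, smul_eq_mul, mul_comm]
    _ ≤ max C 0 * (t - a) := by gcongr; exact hn.2

section Energy

variable {E : Type*} [NormedAddCommGroup E] [InnerProductSpace ℝ E] [CompleteSpace E]

theorem norm_sq_le_add_integral_of_inner_le {D H : ℝ → E} {ψ : ℝ → ℝ} {a b : ℝ} (hab : a ≤ b)
    (hH : IntervalIntegrable H volume a b) (hψ : IntervalIntegrable ψ volume a b)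
    (hD : ∀ x ∈ Icc a b, D x = D a + ∫ r in a..x, H r)
    (hle : ∀ x ∈ Icc a b, ⟪H x, D x⟫ ≤ ψ x) :
    ‖D b‖ ^ 2 ≤ ‖D a‖ ^ 2 + 2 * ∫ x in a..b, ψ x := by
  set P : ℝ → E := fun x ↦ D a + ∫ r in a..x, H r
  have hPac := hH.absolutelyContinuousOnInterval_add_intervalIntegral (D a)
  obtain ⟨B, hB⟩ := hPac.exists_bound
  have hφac : AbsolutelyContinuousOnInterval (fun x ↦ ‖P x‖ ^ 2) a b := by
    refine hPac.of_dist_le_mul (L := 2 * B) fun x hx y hy ↦ ?_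
    have hPx : ‖P x‖ ≤ B := hB x hx
    have hPy : ‖P y‖ ≤ B := hB y hy
    calc dist (‖P x‖ ^ 2) (‖P y‖ ^ 2) = |‖P x‖ - ‖P y‖| * (‖P x‖ + ‖P y‖) := by
          rw [Real.dist_eq, show ‖P x‖ ^ 2 - ‖P y‖ ^ 2 = (‖P x‖ - ‖P y‖) * (‖P x‖ + ‖P y‖) by ring,
            abs_mul, abs_of_nonneg (add_nonneg (norm_nonneg (P x)) (norm_nonneg (P y)))]
      _ ≤ ‖P x - P y‖ * (2 * B) :=
          mul_le_mul (abs_norm_sub_norm_le _ _) (by linarith) (by positivity) (norm_nonneg _)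
      _ = 2 * B * dist (P x) (P y) := by rw [dist_eq_norm, mul_comm]
  have hderiv : ∀ᵐ x, x ∈ Icc a b → deriv (fun x ↦ ‖P x‖ ^ 2) x ≤ 2 * ψ x := by
    filter_upwards [hH.ae_hasDerivAt_integral] with x hx hxab
    rw [uIcc_of_le hab] at hx
    rw [(((hx hxab a (by simp [hab])).const_add (D a)).norm_sq).deriv, ← hD x hxab]
    linarith [hle x hxab, real_inner_comm (D x) (H x)]
  have hftc := hφac.integral_deriv_eq_sub
  have hmono := intervalIntegral.integral_mono_ae_restrict hab hφac.intervalIntegrable_deriv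
    (hψ.const_mul 2) ((ae_restrict_iff' measurableSet_Icc).2 hderiv)
  rw [hftc, intervalIntegral.integral_const_mul] at hmono
  have hPb : P b = D b := (hD b ⟨hab, le_rfl⟩).symm
  have hPa : P a = D a := by simp [P]
  rw [hPb, hPa] at hmono
  linarith

theorem norm_sub_le_of_inner_le {z H : ℝ → E} {a b M : ℝ} (hab : a ≤ b) (hM : 0 ≤ M)
    (hH : IntervalIntegrable H volume a b) (hz : ∀ x ∈ Icc a b, z x = z a + ∫ r in a..x, H r)
    (hle : ∀ x ∈ Icc a b, ⟪H x, z x - z a⟫ ≤ M * ‖z x - z a‖) :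
    ‖z b - z a‖ ≤ 2 * M * (b - a) := by
  set D : ℝ → E := fun x ↦ z x - z a
  have hDint : ∀ x ∈ Icc a b, D x = D a + ∫ r in a..x, H r := fun x hx ↦ by
    simp only [D, sub_self, zero_add, hz x hx, add_sub_cancel_left]
  have hDcont : ContinuousOn D (Icc a b) := by
    refine ((hH.absolutelyContinuousOnInterval_add_intervalIntegral (D a)).continuousOn.mono
      ?_).congr hDint
    rw [uIcc_of_le hab]
  obtain ⟨c, hc, hcmax⟩ := isCompact_Icc.exists_isMaxOn (nonempty_Icc.2 hab) hDcont.norm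
  -- bounding `‖D‖` on `[a, c]` by its maximum turns the energy estimate into
  -- `‖D c‖ ^ 2 ≤ 2 M (c - a) ‖D c‖`
  have henergy := norm_sq_le_add_integral_of_inner_le hc.1
    (hH.mono_set (uIcc_subset_uIcc_left (by rw [uIcc_of_le hab]; exact hc)))
    (intervalIntegrable_const (c := M * ‖D c‖))
    (fun x hx ↦ hDint x ⟨hx.1, hx.2.trans hc.2⟩)
    (fun x hx ↦ (hle x ⟨hx.1, hx.2.trans hc.2⟩).trans
      (mul_le_mul_of_nonneg_left (hcmax ⟨hx.1, hx.2.trans hc.2⟩) hM))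
  simp only [D, sub_self, norm_zero, intervalIntegral.integral_const, smul_eq_mul] at henergy
  have hDc : ‖D c‖ ≤ 2 * M * (c - a) := by
    rcases (norm_nonneg (D c)).eq_or_lt with h | h
    · rw [← h]; nlinarith [hc.1]
    · nlinarith
  calc ‖z b - z a‖ ≤ ‖D c‖ := hcmax ⟨hab, le_rfl⟩
    _ ≤ 2 * M * (c - a) := hDc
    _ ≤ 2 * M * (b - a) := by nlinarith [hc.2]

end Energy

section Projection

variable {E : Type*} [NormedAddCommGroup E] [InnerProductSpace ℝ E] [ProperSpace E]

theorem projOn_spec {C : Set E} (hC : IsClosed C) (hne : C.Nonempty) (x : E) :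
    projOn C x ∈ C ∧ ∀ y ∈ C, ‖x - projOn C x‖ ≤ ‖x - y‖ := by
  have h : ∃ p, p ∈ C ∧ ∀ y ∈ C, ‖x - p‖ ≤ ‖x - y‖ := by
    obtain ⟨p, hp, hd⟩ := hC.exists_infDist_eq_dist hne x
    refine ⟨p, hp, fun y hy ↦ ?_⟩
    rw [← dist_eq_norm, ← dist_eq_norm, ← hd]
    exact infDist_le_dist_of_mem hy
  rw [projOn, dif_pos h]
  exact h.choose_spec

omit [ProperSpace E] in
theorem zero_mem_normalCone (K : Set E) (z : E) : (0 : E) ∈ normalCone K z :=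
  fun w _ ↦ by simp

omit [ProperSpace E] in
theorem isClosed_normalCone (K : Set E) (z : E) : IsClosed (normalCone K z) := by
  have : normalCone K z = ⋂ w ∈ K, {v : E | ⟪v, w - z⟫ ≤ 0} := by
    ext v; simp [normalCone]
  rw [this]
  exact isClosed_biInter fun w _ ↦ isClosed_le (continuous_id.inner continuous_const)
    continuous_const

theorem projOn_normalCone_spec (K : Set E) (z v : E) :
    projOn (normalCone K z) v ∈ normalCone K z ∧
      ∀ y ∈ normalCone K z, ‖v - projOn (normalCone K z) v‖ ≤ ‖v - y‖ :=
  projOn_spec (isClosed_normalCone K z) ⟨0, zero_mem_normalCone K z⟩ v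

theorem norm_projField_le (K : Set E) (f : E → E) (z : E) : ‖projField K f z‖ ≤ ‖f z‖ := by
  simpa [projField] using (projOn_normalCone_spec K z (f z)).2 0 (zero_mem_normalCone K z)

theorem inner_projField_le {K : Set E} (f : E → E) (z : E) {w : E} (hw : w ∈ K) :
    ⟪projField K f z, z - w⟫ ≤ ⟪f z, z - w⟫ := by
  have hP : ⟪projOn (normalCone K z) (f z), w - z⟫ ≤ 0 := (projOn_normalCone_spec K z (f z)).1 w hw
  rw [← neg_sub, inner_neg_right] at hP
  rw [projField, inner_sub_left]
  linarith

variable {K : Set E} {f : E → E}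

theorem inner_projField_sub_le (hmono : ∀ z ∈ K, ∀ w ∈ K, ⟪f z - f w, z - w⟫ ≤ 0)
    {z w : E} (hz : z ∈ K) (hw : w ∈ K) :
    ⟪projField K f z, z - w⟫ ≤ ‖f w‖ * ‖z - w‖ := by
  have hsplit : ⟪f z, z - w⟫ = ⟪f z - f w, z - w⟫ + ⟪f w, z - w⟫ := by
    rw [inner_sub_left]; ring
  linarith [inner_projField_le f z hw, hmono z hz w hw, real_inner_le_norm (f w) (z - w)]

theorem inner_projField_sub_projField_nonpos
    (hmono : ∀ z ∈ K, ∀ w ∈ K, ⟪f z - f w, z - w⟫ ≤ 0) {z w : E} (hz : z ∈ K) (hw : w ∈ K) :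
    ⟪projField K f z - projField K f w, z - w⟫ ≤ 0 := by
  have hsplit : ∀ g : E → E, ⟪g z - g w, z - w⟫ = ⟪g z, z - w⟫ + ⟪g w, w - z⟫ := fun g ↦ by
    rw [inner_sub_left, ← neg_sub z w, inner_neg_right]; ring
  linarith [hsplit f, hsplit (projField K f), inner_projField_le f z hw, inner_projField_le f w hz,
    hmono z hz w hw]

end Projection

section Solutions

variable {E : Type*} [NormedAddCommGroup E] [InnerProductSpace ℝ E]
  {g : E → E} {K : Set E} {z : ℝ → E}

theorem IsSolFrom0.eq_add_intervalIntegral (hz : IsSolFrom0 g K z) {s x t : ℝ}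
    (hint : IntervalIntegrable (fun r ↦ g (z r)) volume 0 t) (hs : s ∈ Icc 0 t)
    (hx : x ∈ Icc 0 t) :
    z x = z s + ∫ r in s..x, g (z r) := by
  have hsub : ∀ u ∈ Icc 0 t, IntervalIntegrable (fun r ↦ g (z r)) volume 0 u := fun u hu ↦
    hint.mono_set (uIcc_subset_uIcc left_mem_uIcc (mem_uIcc_of_le hu.1 hu.2))
  rw [hz.2 x hx.1, hz.2 s hs.1,
    ← intervalIntegral.integral_interval_sub_left (hsub x hx) (hsub s hs)]
  abel

theorem IsSolFrom0.intervalIntegrable_projField [ProperSpace E] {f : E → E} (hK : IsClosed K)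
    (hf : ContinuousOn f K) (hmono : ∀ z ∈ K, ∀ w ∈ K, ⟪f z - f w, z - w⟫ ≤ 0)
    (hz : IsSolFrom0 (projField K f) K z) {t : ℝ} (ht : 0 ≤ t) :
    IntervalIntegrable (fun r ↦ projField K f (z r)) volume 0 t := by
  set G : ℝ → E := fun r ↦ projField K f (z r)
  set M := ‖f (z 0)‖
  -- where the integral defining `z r` is junk, `z r = z 0`
  have hjunk : ∀ r, 0 ≤ r → ¬ IntervalIntegrable G volume 0 r → z r = z 0 := fun r hr h ↦ by
    rw [hz.2 r hr, intervalIntegral.integral_undef h, add_zero]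
  have hnear : ∀ r ∈ Icc 0 t, ‖z r - z 0‖ ≤ 2 * M * t := by
    intro r hr
    by_cases hint : IntervalIntegrable G volume 0 r
    · calc ‖z r - z 0‖ ≤ 2 * M * (r - 0) :=
            norm_sub_le_of_inner_le hr.1 (norm_nonneg _) hint (fun x hx ↦ hz.2 x hx.1)
              fun x hx ↦ inner_projField_sub_le hmono (hz.1 x hx.1) (hz.1 0 le_rfl)
        _ ≤ 2 * M * t := by gcongr; linarith [hr.2]
    · rw [hjunk r hr.1 hint, sub_self, norm_zero]
      positivity
  obtain ⟨C, hC⟩ := ((isCompact_closedBall (z 0) (2 * M * t)).inter_left hK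
    ).exists_bound_of_continuousOn (hf.mono inter_subset_left)
  have hGC : ∀ r ∈ Ioc 0 t, ‖G r‖ ≤ C := fun r hr ↦ (norm_projField_le K f (z r)).trans
    (hC _ ⟨hz.1 r hr.1.le, by
      rw [mem_closedBall, dist_eq_norm]; exact hnear r (Ioc_subset_Icc_self hr)⟩)
  set S := {u ∈ Icc 0 t | IntervalIntegrable G volume 0 u}
  have hS : BddAbove S := ⟨t, fun _ hu ↦ hu.1.2⟩
  have hT : sSup S ∈ Icc 0 t :=
    ⟨le_csSup hS ⟨⟨le_rfl, ht⟩, .refl⟩, csSup_le ⟨0, ⟨le_rfl, ht⟩, .refl⟩ fun _ hu ↦ hu.1.2⟩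
  -- past `sSup S` the solution is frozen at `z 0`, so `G` is constant there
  have hfrozen : IntegrableOn G (Ioc (sSup S) t) := by
    refine (integrableOn_const (C := projField K f (z 0)) measure_Ioc_lt_top.ne).congr_fun
      (fun r hr ↦ ?_) measurableSet_Ioc
    have hr0 : 0 ≤ r := hT.1.trans hr.1.le
    have hrS : r ∉ S := notMem_of_csSup_lt hr.1 hS
    simp only [G, hjunk r hr0 fun hint ↦ hrS ⟨⟨hr0, hr.2⟩, hint⟩]
  rw [intervalIntegrable_iff_integrableOn_Ioc_of_le ht, ← Ioc_union_Ioc_eq_Ioc hT.1 hT.2]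
  exact (integrableOn_Ioc_sSup_of_norm_le ht hGC).union hfrozen

end Solutions

theorem projected_dynamics_pathwise_stable_general
    {N : ℕ} (K : Set (EuclideanSpace ℝ (Fin N)))
    (hKcl : IsClosed K)
    (f : EuclideanSpace ℝ (Fin N) → EuclideanSpace ℝ (Fin N))
    (hf : ContDiffOn ℝ 1 f K)
    (hmono : ∀ z ∈ K, ∀ w ∈ K, (inner ℝ (f z - f w) (z - w) : ℝ) ≤ 0)
    (z z' : ℝ → EuclideanSpace ℝ (Fin N))
    (hz : IsSolFrom0 (projField K f) K z)
    (hz' : IsSolFrom0 (projField K f) K z') :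
    ∀ s t : ℝ, 0 ≤ s → s ≤ t → dist (z t) (z' t) ≤ dist (z s) (z' s) := by
  intro s t hs hst
  have hint := hz.intervalIntegrable_projField hKcl hf.continuousOn hmono (hs.trans hst)
  have hint' := hz'.intervalIntegrable_projField hKcl hf.continuousOn hmono (hs.trans hst)
  have hsub : ∀ x ∈ Icc s t, uIcc s x ⊆ uIcc 0 t := fun x hx ↦
    uIcc_subset_uIcc (mem_uIcc_of_le hs hst) (mem_uIcc_of_le (hs.trans hx.1) hx.2)
  have hdiff : ∀ x ∈ Icc s t, z x - z' x = (z s - z' s) +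
      ∫ r in s..x, (projField K f (z r) - projField K f (z' r)) := fun x hx ↦ by
    have hx0 : x ∈ Icc 0 t := ⟨hs.trans hx.1, hx.2⟩
    rw [hz.eq_add_intervalIntegral hint ⟨hs, hst⟩ hx0,
      hz'.eq_add_intervalIntegral hint' ⟨hs, hst⟩ hx0,
      intervalIntegral.integral_sub (hint.mono_set (hsub x hx)) (hint'.mono_set (hsub x hx))]
    abel
  have henergy := norm_sq_le_add_integral_of_inner_le hst
    ((hint.sub hint').mono_set (hsub t ⟨hst, le_rfl⟩)) intervalIntegrable_const hdiff
    fun x hx ↦ inner_projField_sub_projField_nonpos hmono (hz.1 x (hs.trans hx.1))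
      (hz'.1 x (hs.trans hx.1))
  rw [intervalIntegral.integral_zero, mul_zero, add_zero] at henergy
  rw [dist_eq_norm, dist_eq_norm]
  exact (sq_le_sq₀ (norm_nonneg _) (norm_nonneg _)).1 henergy

/-- **Pathwise stability of projected monotone dynamics.**  Any two Carathéodory solutions of
`ż = f(z) − P_{N_K(z)}(f(z))` on `[0,∞)` with values in `K` have non-increasing distance. -/
theorem projected_dynamics_pathwise_stable
    {N : ℕ} (K : Set (EuclideanSpace ℝ (Fin N)))
    (hKne : K.Nonempty) (hKcl : IsClosed K) (hKco : Convex ℝ K)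
    (f : EuclideanSpace ℝ (Fin N) → EuclideanSpace ℝ (Fin N))
    (hf : ContDiffOn ℝ 1 f K)
    (hmono : ∀ z ∈ K, ∀ w ∈ K, (inner ℝ (f z - f w) (z - w) : ℝ) ≤ 0)
    (z z' : ℝ → EuclideanSpace ℝ (Fin N))
    (hz : IsSolFrom0 (projField K f) K z)
    (hz' : IsSolFrom0 (projField K f) K z') :
    ∀ s t : ℝ, 0 ≤ s → s ≤ t → dist (z t) (z' t) ≤ dist (z s) (z' s) :=
  projected_dynamics_pathwise_stable_general K hKcl f hf hmono z z' hz hz'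

end
end

section
/- Let φ(x₁,x₂,y) = −x₁²/2 + (x₁+x₂)y on ℝ³ and, for a ∈ ℝ, let K_a = {(x₁,x₂,y) ∈ ℝ³ : x₁ ≥ a}. If a > 0, the subgradient method on K_a applied to φ (the system ẋ₁ = [−x₁+y]⁺_{x₁−a}, ẋ₂ = y, ẏ = −x₁−x₂, where the projection forces ẋ₁ ≥ 0 when x₁ = a) is NOT globally convergent: it admits non-constant periodic solutions of the form x₁ = a, (x₂(t), y(t)) oscillating about (−a, 0) with angular frequency 1. -/
open Set Filter MeasureTheory Metric
open scoped RealInnerProductSpace Topology NNReal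

noncomputable section

/-!
On the face `{x₁ = a}` the `x₁`-component of the field is `φ_{x₁} = y - a`, which is `≤ 0` as long
as `y ≤ a`; there the projection onto the normal cone removes exactly this component and leaves
the linear centre `ẋ₂ = y`, `ẏ = -a - x₂`. Its circles about `(-a, 0)` of radius at most `a`
are therefore solutions of the subgradient method. Varying `x₂` shows that every saddle point has
`y = 0`, and `(a, -a, 0)` is one, so the distance from the circle of radius `a` to the saddle set
is at least `a |sin t|`, which does not tend to `0`.
-/

section NearestPoint

variable {E : Type*} [NormedAddCommGroup E] [InnerProductSpace ℝ E]

theorem projOn_eq_of_inner_le {C : Set E} {x p : E} (hp : p ∈ C)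
    (h : ∀ w ∈ C, ⟪x - p, w - p⟫ ≤ 0) : projOn C x = p := by
  have pythagoras : ∀ w ∈ C, ‖x - p‖ ^ 2 + ‖w - p‖ ^ 2 ≤ ‖x - w‖ ^ 2 := fun w hw => by
    have := norm_sub_sq_real (x - p) (w - p)
    rw [sub_sub_sub_cancel_right] at this
    linarith [h w hw]
  have nearest : ∃ q, q ∈ C ∧ ∀ w ∈ C, ‖x - q‖ ≤ ‖x - w‖ :=
    ⟨p, hp, fun w hw => pow_le_pow_iff_left₀ (norm_nonneg _) (norm_nonneg _) two_ne_zero |>.1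
      (by linarith [pythagoras w hw, sq_nonneg ‖w - p‖])⟩
  rw [projOn, dif_pos nearest]
  obtain ⟨hq, hq_min⟩ := nearest.choose_spec
  have h₁ := pythagoras _ hq
  have h₂ := pow_le_pow_left₀ (norm_nonneg _) (hq_min p hp) 2
  rw [← sub_eq_zero, ← norm_eq_zero, ← pow_eq_zero_iff two_ne_zero]
  linarith [sq_nonneg ‖nearest.choose - p‖]

theorem inner_eq_zero_of_mem_normalCone {K : Set E} {z v d : E} (hv : v ∈ normalCone K z)
    (hadd : z + d ∈ K) (hsub : z - d ∈ K) : ⟪v, d⟫ = 0 := by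
  have h₁ := hv _ hadd
  have h₂ := hv _ hsub
  rw [add_sub_cancel_left] at h₁
  rw [sub_sub_cancel_left, inner_neg_right] at h₂
  linarith

end NearestPoint

section HalfSpace

variable {ι : Type*} [Fintype ι]

theorem abs_apply_le_infDist {S : Set (EuclideanSpace ℝ ι)} (hS : S.Nonempty) {i : ι}
    (h : ∀ w ∈ S, w i = 0) (x : EuclideanSpace ℝ ι) : |x i| ≤ infDist x S :=
  (le_infDist hS).2 fun w hw => by
    simpa [h w hw, Real.dist_eq] using PiLp.dist_apply_le x w i

variable [DecidableEq ι]

theorem projOn_normalCone_halfSpace {i : ι} {a : ℝ} {z v : EuclideanSpace ℝ ι} (hz : z i = a)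
    (hv : v i ≤ 0) :
    projOn (normalCone {w | a ≤ w i} z) v = EuclideanSpace.single i (v i) := by
  set p := EuclideanSpace.single i (v i)
  have hd : (v - p) i = 0 := by simp [p]
  refine projOn_eq_of_inner_le (fun w hw => ?_) fun w hw => ?_
  · simp only [p, EuclideanSpace.inner_single_left, PiLp.sub_apply, hz, conj_trivial]
    nlinarith [show a ≤ w i from hw]
  · have hw_perp : ⟪w, v - p⟫ = 0 :=
      inner_eq_zero_of_mem_normalCone hw (by simp [hz, hd]) (by simp [hz, hd])
    rw [inner_sub_right, real_inner_comm, hw_perp]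
    simp [p, EuclideanSpace.inner_single_right, hd]

theorem projField_halfSpace_of_boundary {f : EuclideanSpace ℝ ι → EuclideanSpace ℝ ι} {i : ι}
    {a : ℝ} {z : EuclideanSpace ℝ ι} (hz : z i = a) (hf : f z i ≤ 0) :
    projField {w | a ≤ w i} f z = f z - EuclideanSpace.single i (f z i) := by
  rw [projField, projOn_normalCone_halfSpace hz hf]

end HalfSpace

theorem isSolFrom0_of_hasDerivAt {E : Type*} [NormedAddCommGroup E] [InnerProductSpace ℝ E]
    [CompleteSpace E] {g : E → E} {K : Set E} {z : ℝ → E} (hK : ∀ t, 0 ≤ t → z t ∈ K)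
    (hz : ∀ t, HasDerivAt z (g (z t)) t) (hg : Continuous fun t => g (z t)) :
    IsSolFrom0 g K z :=
  ⟨hK, fun t _ => by
    rw [intervalIntegral.integral_eq_sub_of_hasDerivAt (fun s _ => hz s)
      (hg.intervalIntegrable 0 t), add_sub_cancel]⟩

theorem Real.not_tendsto_sin_atTop_nhds_zero : ¬ Tendsto Real.sin atTop (𝓝 0) := by
  intro h
  have hu : Tendsto (fun n : ℕ => Real.pi / 2 + n * (2 * Real.pi)) atTop atTop :=
    tendsto_atTop_add_const_left _ _ <|
      tendsto_natCast_atTop_atTop.atTop_mul_const Real.two_pi_pos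
  have := h.comp hu
  simp only [Function.comp_def, Real.sin_add_nat_mul_two_pi, Real.sin_pi_div_two] at this
  exact one_ne_zero (tendsto_nhds_unique tendsto_const_nhds this)

local notation "ℝ³" => EuclideanSpace ℝ (Fin 3)

namespace SaddleExample

def φ (z : ℝ³) : ℝ := -(z 0) ^ 2 / 2 + (z 0 + z 1) * z 2

def K (a : ℝ) : Set ℝ³ := {z | a ≤ z 0}

def orbit (a t : ℝ) : ℝ³ := !₂[a, -a + a * Real.cos t, -a * Real.sin t]

theorem gradient_φ (z : ℝ³) : gradient φ z = !₂[-(z 0) + z 2, z 2, z 0 + z 1] := by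
  have hφ : φ = fun w : ℝ³ => w 0 ^ 2 * (-1 / 2) + (w 0 + w 1) * w 2 := by
    funext w
    simp only [φ]
    ring
  have h := fun i : Fin 3 => PiLp.hasFDerivAt_apply (𝕜 := ℝ) 2 z i
  rw [hφ]
  refine HasGradientAt.gradient (hasGradientAt_iff_hasFDerivAt.2 ?_)
  refine ((((h 0).pow 2).mul_const (-1 / 2)).add (((h 0).add (h 1)).mul (h 2))).congr_fderiv ?_
  ext u
  simp only [Fin.isValue, Nat.add_one_sub_one, pow_one, nsmul_eq_mul, Nat.cast_ofNat, Pi.add_apply,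
    smul_add, add_apply, smul_apply, PiLp.proj_apply, smul_eq_mul,
    InnerProductSpace.toDual_apply_apply, PiLp.inner_apply, RCLike.inner_apply, Real.ringHom_apply,
    Fin.sum_univ_three, Matrix.cons_val_zero, Matrix.cons_val_one, Matrix.cons_val]
  ring

theorem gradField_φ (z : ℝ³) : gradField 3 2 φ z = !₂[-(z 0) + z 2, z 2, -(z 0 + z 1)] := by
  ext i
  fin_cases i <;> simp [gradField, gradient_φ]

theorem projField_φ_of_boundary {a : ℝ} {z : ℝ³} (hz : z 0 = a) (hy : z 2 ≤ a) :
    projField (K a) (gradField 3 2 φ) z = !₂[0, z 2, -(z 0 + z 1)] := by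
  rw [K, projField_halfSpace_of_boundary hz (by simp [gradField_φ, hz, hy])]
  ext i
  fin_cases i <;> simp [gradField_φ]

theorem isSaddlePt_center {a : ℝ} (ha : 0 ≤ a) : IsSaddlePt 3 2 (K a) φ !₂[a, -a, 0] := by
  refine ⟨by simp [K], fun w hw => ⟨fun hy => ?_, fun hx => ?_⟩⟩
  · have hw2 : w 2 = 0 := by simpa using hy 2 (by decide)
    have : a ≤ w 0 := hw
    simp only [φ, Fin.isValue, hw2, mul_zero, add_zero, Matrix.cons_val_zero, Matrix.cons_val_one,
      add_neg_cancel, Matrix.cons_val]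
    nlinarith
  · have hw0 : w 0 = a := by simpa using hx 0 (by decide)
    have hw1 : w 1 = -a := by simpa using hx 1 (by decide)
    simp [φ, hw0, hw1]

theorem saddleSet_subset_setOf_apply_two_eq_zero (a : ℝ) :
    saddleSet 3 2 (K a) φ ⊆ {w | w 2 = 0} := fun zb h => by
  show zb 2 = 0
  set w : ℝ³ := !₂[zb 0, zb 1 + zb 2, zb 2]
  have hw : w ∈ K a := by simpa [w, K] using h.1
  have := (h.2 w hw).1 fun i hi => by fin_cases i <;> simp_all [w]
  simp only [φ, w, Fin.isValue, Matrix.cons_val_zero, Matrix.cons_val_one, Matrix.cons_val,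
    add_le_add_iff_left] at this
  nlinarith [sq_nonneg (zb 2)]

theorem hasDerivAt_orbit (a t : ℝ) :
    HasDerivAt (orbit a) !₂[0, -a * Real.sin t, -a * Real.cos t] t := by
  have h : HasDerivAt (fun s => ![a, -a + a * Real.cos s, -a * Real.sin s])
      ![0, -a * Real.sin t, -a * Real.cos t] t := by
    refine hasDerivAt_pi.2 fun i => ?_
    fin_cases i
    · exact hasDerivAt_const t a
    · simpa using ((Real.hasDerivAt_cos t).const_mul a).const_add (-a)
    · simpa using (Real.hasDerivAt_sin t).const_mul (-a)
  exact (PiLp.hasFDerivAt_toLp 2 _).comp_hasDerivAt t h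

theorem isSolFrom0_orbit {a : ℝ} (ha : 0 ≤ a) :
    IsSolFrom0 (projField (K a) (gradField 3 2 φ)) (K a) (orbit a) := by
  have hfield : ∀ t, projField (K a) (gradField 3 2 φ) (orbit a t)
      = !₂[0, -a * Real.sin t, -a * Real.cos t] := fun t => by
    have hy : orbit a t 2 ≤ a := by
      simp only [orbit, Fin.isValue, Matrix.cons_val]
      nlinarith [Real.neg_one_le_sin t]
    rw [projField_φ_of_boundary (a := a) rfl hy]
    ext i
    fin_cases i <;> simp [orbit]
  refine isSolFrom0_of_hasDerivAt (fun t _ => le_refl a)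
    (fun t => hfield t ▸ hasDerivAt_orbit a t) ?_
  simp only [hfield]
  fun_prop

theorem not_globallyConvergent {a : ℝ} (ha : 0 < a) : ¬ GloballyConvergent 3 2 (K a) φ := by
  intro h
  have hS : (saddleSet 3 2 (K a) φ).Nonempty := ⟨_, isSaddlePt_center ha.le⟩
  have hbound : ∀ t, |Real.sin t| ≤ infDist (orbit a t) (saddleSet 3 2 (K a) φ) / a :=
      fun t => by
    have := abs_apply_le_infDist hS (i := 2) (saddleSet_subset_setOf_apply_two_eq_zero a)
      (orbit a t)
    rw [le_div_iff₀ ha]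
    simpa [orbit, abs_mul, abs_of_pos ha, mul_comm] using this
  refine Real.not_tendsto_sin_atTop_nhds_zero ((tendsto_zero_iff_abs_tendsto_zero _).2 ?_)
  exact squeeze_zero (fun t => abs_nonneg _) hbound
    (by simpa using (h _ (isSolFrom0_orbit ha.le)).div_const a)

end SaddleExample

/-- **Non-convergence of the subgradient method on `K_a` for `a > 0`** (Example 4(ii)).
For `φ(x₁,x₂,y) = −x₁²/2 + (x₁+x₂) y` and `K_a = {x₁ ≥ a}` with `a > 0`, the subgradient
method is not globally convergent: it admits non-constant periodic solutions with `x₁ ≡ a`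
and `(x₂, y)` oscillating about `(−a, 0)` with angular frequency `1`. -/
theorem subgradient_method_Ka_not_convergent
    (a : ℝ) (ha : 0 < a)
    (φ : EuclideanSpace ℝ (Fin 3) → ℝ)
    (hφ : φ = fun z => -(z 0)^2/2 + (z 0 + z 1) * z 2)
    (Ka : Set (EuclideanSpace ℝ (Fin 3)))
    (hKa : Ka = {z | a ≤ z 0}) :
    ¬ GloballyConvergent 3 2 Ka φ ∧
    ∃ z : ℝ → EuclideanSpace ℝ (Fin 3),
      IsSolFrom0 (projField Ka (gradField 3 2 φ)) Ka z ∧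
      ∃ c d : ℝ, (c ≠ 0 ∨ d ≠ 0) ∧ ∀ t : ℝ, 0 ≤ t →
        z t 0 = a ∧
        z t 1 = -a + c * Real.cos t + d * Real.sin t ∧
        z t 2 = -c * Real.sin t + d * Real.cos t := by
  subst hφ hKa
  refine ⟨SaddleExample.not_globallyConvergent ha, SaddleExample.orbit a,
    SaddleExample.isSolFrom0_orbit ha.le, a, 0, Or.inl ha.ne', fun t _ => ⟨rfl, ?_, ?_⟩⟩ <;>
  simp [SaddleExample.orbit]

end
end
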